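/- For complex z, w avoiding poles, π⁻¹ · 2^{1−z−w} Γ(z) Γ(w) cos(π(w−z)/2) = (1/2) · [Γ(z/2)/Γ((1−z)/2)] · [Γ(w/2)/Γ((1−w)/2)] · (1 + tan(πz/2) tan(πw/2)). -/

import Mathlib

/-!
Duplication and reflection combine to
`Γ(z/2) / Γ((1-z)/2) = 2^{1-z} Γ(z) cos(πz/2) / √π`.
Multiplying this for `z` and `w`, the factor `cos(πz/2) cos(πw/2) (1 + tan(πz/2) tan(πw/2))`
is `cos(π(w-z)/2)` by the addition formula, and `2^{1-z} 2^{1-w} / π = 2 · 2^{1-z-w} / π`.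
-/

open Real Complex

namespace Complex

theorem ofReal_sqrt_pi_mul_self : (↑(√π) : ℂ) * ↑(√π) = π := by
  rw [← ofReal_mul, Real.mul_self_sqrt pi_pos.le]

theorem Gamma_half_mul_Gamma_add_one_half (z : ℂ) :
    Gamma (z / 2) * Gamma ((z + 1) / 2) = (2 : ℂ) ^ (1 - z) * ↑(√π) * Gamma z := by
  have h := Gamma_mul_Gamma_add_half (z / 2)
  rw [show z / 2 + 1 / 2 = (z + 1) / 2 by ring, show 2 * (z / 2) = z by ring] at h
  linear_combination h

theorem Gamma_add_one_half_mul_Gamma_one_sub_half (z : ℂ) :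
    Gamma ((z + 1) / 2) * Gamma ((1 - z) / 2) = π / cos (π * z / 2) := by
  have h := Gamma_mul_Gamma_one_sub ((z + 1) / 2)
  rwa [show 1 - (z + 1) / 2 = (1 - z) / 2 by ring,
    show (π : ℂ) * ((z + 1) / 2) = π * z / 2 + π / 2 by ring, sin_add_pi_div_two] at h

theorem Gamma_half_div_Gamma_one_sub_half {z : ℂ} (hz : cos (π * z / 2) ≠ 0) :
    Gamma (z / 2) / Gamma ((1 - z) / 2) =
      (2 : ℂ) ^ (1 - z) * Gamma z * cos (π * z / 2) / ↑(√π) := by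
  have hπ : (π : ℂ) ≠ 0 := ofReal_ne_zero.mpr pi_ne_zero
  have hsqrt : (↑(√π) : ℂ) ≠ 0 := ofReal_ne_zero.mpr (Real.sqrt_pos.mpr pi_pos).ne'
  have hrefl := Gamma_add_one_half_mul_Gamma_one_sub_half z
  have hpos : Gamma ((z + 1) / 2) ≠ 0 := by
    intro h
    rw [h, zero_mul, eq_comm, div_eq_zero_iff] at hrefl
    exact hrefl.elim hπ hz
  have hneg : Gamma ((1 - z) / 2) = π / (Gamma ((z + 1) / 2) * cos (π * z / 2)) := by
    rw [eq_div_iff (mul_ne_zero hpos hz), ← mul_assoc, mul_comm (Gamma _), hrefl,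
      div_mul_cancel₀ _ hz]
  rw [hneg, div_div_eq_mul_div, ← mul_assoc, Gamma_half_mul_Gamma_add_one_half,
    div_eq_div_iff hπ hsqrt]
  linear_combination (2 : ℂ) ^ (1 - z) * Gamma z * cos (π * z / 2) * ofReal_sqrt_pi_mul_self

theorem cos_sub_eq_cos_mul_cos_mul_one_add_tan_mul_tan {a b : ℂ} (ha : cos a ≠ 0)
    (hb : cos b ≠ 0) : cos (b - a) = cos a * cos b * (1 + tan a * tan b) := by
  rw [cos_sub, tan_eq_sin_div_cos, tan_eq_sin_div_cos]
  field_simp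

end Complex

theorem stmt5_general (z w : ℂ)
    (h3 : Complex.cos ((π : ℂ) * z / 2) ≠ 0) (h4 : Complex.cos ((π : ℂ) * w / 2) ≠ 0) :
    (π : ℂ)⁻¹ * (2 : ℂ) ^ ((1 : ℂ) - z - w) * Complex.Gamma z * Complex.Gamma w *
        Complex.cos ((π : ℂ) * (w - z) / 2) =
      (1 / 2) * (Complex.Gamma (z / 2) / Complex.Gamma ((1 - z) / 2)) *
        (Complex.Gamma (w / 2) / Complex.Gamma ((1 - w) / 2)) *
        (1 + Complex.tan ((π : ℂ) * z / 2) * Complex.tan ((π : ℂ) * w / 2)) := by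
  have hpow : (2 : ℂ) ^ (1 - z) * (2 : ℂ) ^ (1 - w) = 2 * (2 : ℂ) ^ (1 - z - w) := by
    rw [← cpow_add _ _ two_ne_zero, show 1 - z + (1 - w) = 1 + (1 - z - w) by ring,
      cpow_add _ _ two_ne_zero, cpow_one]
  rw [Gamma_half_div_Gamma_one_sub_half h3, Gamma_half_div_Gamma_one_sub_half h4,
    show (π : ℂ) * (w - z) / 2 = π * w / 2 - π * z / 2 by ring,
    cos_sub_eq_cos_mul_cos_mul_one_add_tan_mul_tan h3 h4]
  set X := Gamma z * Gamma w * (cos (π * z / 2) * cos (π * w / 2) *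
    (1 + tan (π * z / 2) * tan (π * w / 2)))
  linear_combination (-(1 / 2) * X * (↑(√π))⁻¹ * (↑(√π))⁻¹) * hpow -
    (2 : ℂ) ^ (1 - z - w) * X * congrArg Inv.inv ofReal_sqrt_pi_mul_self

/-- for `z, w ∈ ℂ` avoiding poles (so both sides are defined),
`π⁻¹ · 2^{1−z−w} Γ(z) Γ(w) cos(π(w−z)/2)
  = (1/2) · [Γ(z/2)/Γ((1−z)/2)] · [Γ(w/2)/Γ((1−w)/2)] · (1 + tan(πz/2) tan(πw/2))`. -/
theorem stmt5 (z w : ℂ)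
    (hz : ∀ n : ℕ, z ≠ -n) (hw : ∀ n : ℕ, w ≠ -n)
    (h1 : Complex.Gamma ((1 - z) / 2) ≠ 0) (h2 : Complex.Gamma ((1 - w) / 2) ≠ 0)
    (h3 : Complex.cos ((π : ℂ) * z / 2) ≠ 0) (h4 : Complex.cos ((π : ℂ) * w / 2) ≠ 0) :
    (π : ℂ)⁻¹ * (2 : ℂ) ^ ((1 : ℂ) - z - w) * Complex.Gamma z * Complex.Gamma w *
        Complex.cos ((π : ℂ) * (w - z) / 2) =
      (1 / 2) * (Complex.Gamma (z / 2) / Complex.Gamma ((1 - z) / 2)) *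
        (Complex.Gamma (w / 2) / Complex.Gamma ((1 - w) / 2)) *
        (1 + Complex.tan ((π : ℂ) * z / 2) * Complex.tan ((π : ℂ) * w / 2)) :=
  stmt5_general z w h3 h4
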